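/- arXiv:2104.02943 — 4 statements merged into one kernel-verified Lean document; each statement's English description precedes it below -/
import Mathlib

section
/- Let s : ℝ^d → ℝ be a scoring function such that G_s and H_s are continuous and H_s is strictly increasing. For u ∈ (0,1) define the generalized inverse H_s^{-1}(u) = inf{t ∈ ℝ : H_s(t) ≥ u}, and for α ∈ (0,1) set ROC(s,α) = 1 − G_s(H_s^{-1}(1−α)). Then for every bounded nondecreasing Borel function φ : [0,1] → ℝ, W_φ(s) = (1/p)·∫₀¹ φ(u) du − ((1−p)/p)·∫₀¹ φ( p·(1−ROC(s,α)) + (1−p)·(1−α) ) dα. -/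
open MeasureTheory

noncomputable section

/-- cdf of the image of `μ` by the scoring function `s`. -/
def scoreCDF {d : ℕ} (μ : Measure (Fin d → ℝ)) (s : (Fin d → ℝ) → ℝ) (t : ℝ) : ℝ :=
  ((μ.map s) (Set.Iic t)).toReal

/-- pooled cdf `F_s = p G_s + (1-p) H_s`. -/
def pooledCDF {d : ℕ} (G H : Measure (Fin d → ℝ)) (p : ℝ) (s : (Fin d → ℝ) → ℝ)
    (t : ℝ) : ℝ :=
  p * scoreCDF G s t + (1 - p) * scoreCDF H s t

/-- `W_φ`-ranking performance of `s` : `E[φ(F_s(s(X)))]` with `X ~ G`. -/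
def Wperf {d : ℕ} (G H : Measure (Fin d → ℝ)) (p : ℝ) (φ : ℝ → ℝ)
    (s : (Fin d → ℝ) → ℝ) : ℝ :=
  ∫ x, φ (pooledCDF G H p s (s x)) ∂G

/-- generalized inverse of the cdf `H_s`. -/
def genInv {d : ℕ} (H : Measure (Fin d → ℝ)) (s : (Fin d → ℝ) → ℝ) (u : ℝ) : ℝ :=
  sInf {t : ℝ | u ≤ scoreCDF H s t}

/-- ROC curve of `s` : `α ↦ 1 − G_s(H_s⁻¹(1−α))`. -/
def ROC {d : ℕ} (G H : Measure (Fin d → ℝ)) (s : (Fin d → ℝ) → ℝ) (α : ℝ) : ℝ :=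
  1 - scoreCDF G s (genInv H s (1 - α))

/-! The pooled score cdf `F_s` is the cdf of the mixture `p G_s + (1-p) H_s`; being continuous,
it pushes that mixture forward to the uniform law on `(0,1]` (probability integral transform),
so `p W_φ(s) + (1-p) E[φ(F_s(s(Y)))] = ∫₀¹ φ`. Since `H_s` is continuous and strictly increasing,
`H_s(s(Y))` is uniform as well and `H_s⁻¹ ∘ H_s = id`, whence
`E[φ(F_s(s(Y)))] = ∫₀¹ φ(F_s(H_s⁻¹ u)) du`. After the substitution `u = 1 - α`, the identity
`H_s(H_s⁻¹(1-α)) = 1-α` turns `F_s(H_s⁻¹(1-α))` into `p(1 - ROC(s,α)) + (1-p)(1-α)`. -/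

open Set Filter ProbabilityTheory
open scoped Topology

section GeneralizedInverse

variable {F : ℝ → ℝ}

lemma sInf_setOf_apply_le (hF : StrictMono F) (x : ℝ) : sInf {t | F x ≤ F t} = x := by
  simp_rw [hF.le_iff_le]
  exact csInf_Ici

lemma apply_sInf_setOf_le (hF : StrictMono F) (hc : Continuous F)
    (h0 : Tendsto F atBot (𝓝 0)) (h1 : Tendsto F atTop (𝓝 1)) {u : ℝ} (hu : u ∈ Ioo 0 1) :
    F (sInf {t | u ≤ F t}) = u := by
  obtain ⟨x, rfl⟩ := mem_range_of_exists_le_of_exists_ge hc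
    (h0.eventually_le_const hu.1).exists (h1.eventually_const_le hu.2).exists
  rw [sInf_setOf_apply_le hF]

lemma monotoneOn_sInf_setOf_le (hF : StrictMono F) (hc : Continuous F)
    (h0 : Tendsto F atBot (𝓝 0)) (h1 : Tendsto F atTop (𝓝 1)) :
    MonotoneOn (fun u => sInf {t | u ≤ F t}) (Ioo 0 1) :=
  fun u hu v hv huv => hF.le_iff_le.mp <| by
    rwa [apply_sInf_setOf_le hF hc h0 h1 hu, apply_sInf_setOf_le hF hc h0 h1 hv]

end GeneralizedInverse

namespace ProbabilityTheory

variable {μ ν : Measure ℝ}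

lemma measure_setOf_cdf_le [IsProbabilityMeasure μ] (hμ : Continuous (cdf μ)) {u : ℝ}
    (hu : u < 1) : μ {x | cdf μ x ≤ u} = ENNReal.ofReal u := by
  set S := {x | cdf μ x ≤ u}
  rcases S.eq_empty_or_nonempty with hS | ⟨a, ha⟩
  · have hu0 : u ≤ 0 := by
      by_contra! hu0
      obtain ⟨x, hx⟩ := ((tendsto_cdf_atBot μ).eventually_lt_const hu0).exists
      exact hS.subset (show x ∈ S from hx.le)
    rw [hS, measure_empty, ENNReal.ofReal_of_nonpos hu0]
  · obtain ⟨b, hb⟩ := ((tendsto_cdf_atTop μ).eventually_const_lt hu).exists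
    have hbdd : BddAbove S := ⟨b, fun x hx => ((monotone_cdf μ).reflect_lt (hx.trans_lt hb)).le⟩
    obtain ⟨x, hx⟩ : u ∈ range (cdf μ) := intermediate_value_univ a b hμ ⟨ha, hb.le⟩
    have hsup : sSup S ∈ S := (isClosed_le hμ continuous_const).csSup_mem ⟨a, ha⟩ hbdd
    have hS : S = Iic (sSup S) :=
      Subset.antisymm (fun y hy => le_csSup hbdd hy) fun y hy => (monotone_cdf μ hy).trans hsup
    have hcdf : cdf μ (sSup S) = u :=
      le_antisymm hsup (hx ▸ monotone_cdf μ (le_csSup hbdd (show x ∈ S from hx.le)))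
    rw [hS, ← ofReal_cdf, hcdf]

theorem map_cdf_eq_restrict_Ioc [IsProbabilityMeasure μ] (hμ : Continuous (cdf μ)) :
    μ.map (cdf μ) = volume.restrict (Ioc 0 1) := by
  have := Measure.isProbabilityMeasure_map (μ := μ) hμ.aemeasurable
  refine Measure.ext_of_Iic _ _ fun u => ?_
  rw [Measure.map_apply hμ.measurable measurableSet_Iic, Measure.restrict_apply measurableSet_Iic]
  rcases lt_or_ge u 1 with hu | hu
  · rw [Iic_inter_Ioc_of_le hu.le, Real.volume_Ioc, sub_zero]
    exact measure_setOf_cdf_le hμ hu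
  · have hpre : cdf μ ⁻¹' Iic u = univ := eq_univ_of_forall fun x => (cdf_le_one μ x).trans hu
    rw [hpre, inter_eq_right.mpr fun x hx => hx.2.trans hu, measure_univ, Real.volume_Ioc]
    norm_num

theorem integral_comp_cdf [IsProbabilityMeasure μ] (hμ : Continuous (cdf μ)) {φ : ℝ → ℝ}
    (hφ : AEStronglyMeasurable φ (volume.restrict (Ioc 0 1))) :
    ∫ x, φ (cdf μ x) ∂μ = ∫ u in (0 : ℝ)..1, φ u := by
  rw [intervalIntegral.integral_of_le zero_le_one, ← map_cdf_eq_restrict_Ioc hμ,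
    integral_map hμ.aemeasurable (by rwa [map_cdf_eq_restrict_Ioc hμ])]

theorem integral_eq_integral_comp_sInf_setOf_le_cdf [IsProbabilityMeasure ν]
    (hc : Continuous (cdf ν)) (hF : StrictMono (cdf ν)) {f : ℝ → ℝ} (hf : Measurable f) :
    ∫ t, f t ∂ν = ∫ u in (0 : ℝ)..1, f (sInf {t | u ≤ cdf ν t}) := by
  have hmeas : AEMeasurable (fun u => sInf {t | u ≤ cdf ν t}) (volume.restrict (Ioc 0 1)) := by
    rw [← Measure.restrict_congr_set Ioo_ae_eq_Ioc]
    exact aemeasurable_restrict_of_monotoneOn measurableSet_Ioo <|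
      monotoneOn_sInf_setOf_le hF hc (tendsto_cdf_atBot ν) (tendsto_cdf_atTop ν)
  rw [← integral_comp_cdf (φ := fun u => f (sInf {t | u ≤ cdf ν t})) hc
    (hf.comp_aemeasurable hmeas).aestronglyMeasurable]
  simp only [sInf_setOf_apply_le hF]

def mixture (p : ℝ) (μ ν : Measure ℝ) : Measure ℝ :=
  ENNReal.ofReal p • μ + ENNReal.ofReal (1 - p) • ν

lemma isProbabilityMeasure_mixture [IsProbabilityMeasure μ] [IsProbabilityMeasure ν] {p : ℝ}
    (hp0 : 0 ≤ p) (hp1 : p ≤ 1) : IsProbabilityMeasure (mixture p μ ν) := by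
  constructor
  simp only [mixture, Measure.add_apply, Measure.smul_apply, measure_univ, smul_eq_mul, mul_one]
  rw [← ENNReal.ofReal_add hp0 (by linarith)]
  norm_num

lemma cdf_mixture [IsProbabilityMeasure μ] [IsProbabilityMeasure ν] {p : ℝ} (hp0 : 0 ≤ p)
    (hp1 : p ≤ 1) : cdf (mixture p μ ν) = fun t => p * cdf μ t + (1 - p) * cdf ν t := by
  have := isProbabilityMeasure_mixture (μ := μ) (ν := ν) hp0 hp1
  ext t
  simp only [cdf_eq_real, measureReal_def]
  simp only [mixture, Measure.add_apply, Measure.smul_apply, smul_eq_mul]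
  rw [ENNReal.toReal_add (by finiteness) (by finiteness), ENNReal.toReal_mul, ENNReal.toReal_mul,
    ENNReal.toReal_ofReal hp0, ENNReal.toReal_ofReal (by linarith)]

lemma integral_mixture {p : ℝ} (hp0 : 0 ≤ p) (hp1 : p ≤ 1) {f : ℝ → ℝ}
    (hμ : Integrable f μ) (hν : Integrable f ν) :
    ∫ x, f x ∂(mixture p μ ν) = p * ∫ x, f x ∂μ + (1 - p) * ∫ x, f x ∂ν := by
  rw [mixture, integral_add_measure (hμ.smul_measure ENNReal.ofReal_ne_top)
      (hν.smul_measure ENNReal.ofReal_ne_top), integral_smul_measure, integral_smul_measure,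
    ENNReal.toReal_ofReal hp0, ENNReal.toReal_ofReal (by linarith), smul_eq_mul, smul_eq_mul]

theorem mixture_integral_comp_cdf [IsProbabilityMeasure μ] [IsProbabilityMeasure ν] {p : ℝ}
    (hp0 : 0 ≤ p) (hp1 : p ≤ 1) (hc : Continuous fun t => p * cdf μ t + (1 - p) * cdf ν t)
    {φ : ℝ → ℝ} (hφ : Measurable φ) {B : ℝ} (hB : ∀ u ∈ Icc (0 : ℝ) 1, |φ u| ≤ B) :
    p * ∫ x, φ (p * cdf μ x + (1 - p) * cdf ν x) ∂μ
      + (1 - p) * ∫ x, φ (p * cdf μ x + (1 - p) * cdf ν x) ∂ν = ∫ u in (0 : ℝ)..1, φ u := by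
  have := isProbabilityMeasure_mixture (μ := μ) (ν := ν) hp0 hp1
  have hcdf := cdf_mixture (μ := μ) (ν := ν) hp0 hp1
  have hint (ρ : Measure ℝ) [IsFiniteMeasure ρ] :
      Integrable (fun x => φ (cdf (mixture p μ ν) x)) ρ :=
    (integrable_const B).mono' (hφ.comp (cdf _).mono.measurable).aestronglyMeasurable
      (ae_of_all _ fun x => hB _ ⟨cdf_nonneg _ x, cdf_le_one _ x⟩)
  have key := integral_comp_cdf (hcdf ▸ hc) hφ.aestronglyMeasurable
  rwa [integral_mixture hp0 hp1 (hint μ) (hint ν), hcdf] at key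

end ProbabilityTheory

section ScoringFunction

variable {d : ℕ} {G H : Measure (Fin d → ℝ)} {s : (Fin d → ℝ) → ℝ}

lemma scoreCDF_eq_cdf [IsProbabilityMeasure G] (hs : AEMeasurable s G) :
    scoreCDF G s = cdf (G.map s) := by
  have := Measure.isProbabilityMeasure_map hs
  ext t
  rw [cdf_eq_real, measureReal_def, scoreCDF]

lemma pooledCDF_eq_cdf [IsProbabilityMeasure G] [IsProbabilityMeasure H] (p : ℝ)
    (hs : Measurable s) :
    pooledCDF G H p s = fun t => p * cdf (G.map s) t + (1 - p) * cdf (H.map s) t := by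
  funext t
  rw [pooledCDF, scoreCDF_eq_cdf hs.aemeasurable, scoreCDF_eq_cdf hs.aemeasurable]

lemma scoreCDF_genInv [IsProbabilityMeasure H] (hs : AEMeasurable s H)
    (hHs : Continuous (scoreCDF H s)) (hHmono : StrictMono (scoreCDF H s)) {u : ℝ}
    (hu : u ∈ Ioo 0 1) : scoreCDF H s (genInv H s u) = u := by
  rw [scoreCDF_eq_cdf hs] at hHs hHmono ⊢
  simpa only [genInv, scoreCDF_eq_cdf hs] using
    apply_sInf_setOf_le hHmono hHs (tendsto_cdf_atBot _) (tendsto_cdf_atTop _) hu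

lemma pooledCDF_genInv_one_sub [IsProbabilityMeasure H] (p : ℝ) (hs : AEMeasurable s H)
    (hHs : Continuous (scoreCDF H s)) (hHmono : StrictMono (scoreCDF H s)) {α : ℝ}
    (hα : α ∈ Ioo 0 1) :
    pooledCDF G H p s (genInv H s (1 - α)) = p * (1 - ROC G H s α) + (1 - p) * (1 - α) := by
  have h1α : 1 - α ∈ Ioo (0 : ℝ) 1 := ⟨by linarith [hα.2], by linarith [hα.1]⟩
  rw [pooledCDF, ROC, scoreCDF_genInv hs hHs hHmono h1α]
  ring

lemma integral_comp_one_sub_ROC [IsProbabilityMeasure G] [IsProbabilityMeasure H] (p : ℝ)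
    (hs : Measurable s) (hHs : Continuous (scoreCDF H s)) (hHmono : StrictMono (scoreCDF H s))
    {φ : ℝ → ℝ} (hφ : Measurable φ) :
    ∫ α in (0 : ℝ)..1, φ (p * (1 - ROC G H s α) + (1 - p) * (1 - α))
      = ∫ t, φ (pooledCDF G H p s t) ∂(H.map s) := by
  have := Measure.isProbabilityMeasure_map (μ := H) hs.aemeasurable
  have hpooled : Measurable (pooledCDF G H p s) := by
    rw [pooledCDF_eq_cdf p hs]
    exact (measurable_const.mul (cdf _).mono.measurable).add
      (measurable_const.mul (cdf _).mono.measurable)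
  calc ∫ α in (0 : ℝ)..1, φ (p * (1 - ROC G H s α) + (1 - p) * (1 - α))
      = ∫ α in (0 : ℝ)..1, φ (pooledCDF G H p s (genInv H s (1 - α))) := by
        -- the integrands may differ at `α = 1`, where `genInv H s 0 = sInf univ` is a junk value
        refine intervalIntegral.integral_congr_ae ?_
        filter_upwards [Measure.ae_ne volume 1] with α hα1 hα
        rw [uIoc_of_le zero_le_one] at hα
        rw [pooledCDF_genInv_one_sub p hs.aemeasurable hHs hHmono
          ⟨hα.1, lt_of_le_of_ne hα.2 hα1⟩]
    _ = ∫ u in (0 : ℝ)..1, φ (pooledCDF G H p s (genInv H s u)) := by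
        simpa using intervalIntegral.integral_comp_sub_left
          (fun u => φ (pooledCDF G H p s (genInv H s u))) (1 : ℝ) (a := 0) (b := 1)
    _ = ∫ t, φ (pooledCDF G H p s t) ∂(H.map s) := by
        rw [scoreCDF_eq_cdf hs.aemeasurable] at hHs hHmono
        simp only [genInv, scoreCDF_eq_cdf hs.aemeasurable]
        exact (integral_eq_integral_comp_sInf_setOf_le_cdf hHs hHmono (hφ.comp hpooled)).symm

end ScoringFunction

theorem stmt1_general {d : ℕ} (G H : Measure (Fin d → ℝ))
    [IsProbabilityMeasure G] [IsProbabilityMeasure H]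
    (p : ℝ) (hp : p ∈ Set.Ioo (0 : ℝ) 1)
    (s : (Fin d → ℝ) → ℝ) (hs : Measurable s)
    (hGs : Continuous (scoreCDF G s)) (hHs : Continuous (scoreCDF H s))
    (hHmono : StrictMono (scoreCDF H s))
    (φ : ℝ → ℝ) (hφmeas : Measurable φ)
    (B : ℝ) (hφbdd : ∀ u ∈ Set.Icc (0 : ℝ) 1, |φ u| ≤ B) :
    Wperf G H p φ s
      = (1 / p) * (∫ u in (0 : ℝ)..1, φ u)
        - ((1 - p) / p) *
          ∫ α in (0 : ℝ)..1, φ (p * (1 - ROC G H s α) + (1 - p) * (1 - α)) := by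
  obtain ⟨hp0, hp1⟩ := hp
  have hcont : Continuous (pooledCDF G H p s) := by
    unfold pooledCDF
    fun_prop
  have hW : Wperf G H p φ s = ∫ t, φ (pooledCDF G H p s t) ∂(G.map s) :=
    (integral_map hs.aemeasurable (hφmeas.comp hcont.measurable).aestronglyMeasurable).symm
  have := Measure.isProbabilityMeasure_map (μ := G) hs.aemeasurable
  have := Measure.isProbabilityMeasure_map (μ := H) hs.aemeasurable
  have hF := pooledCDF_eq_cdf (G := G) (H := H) p hs
  have hmix := mixture_integral_comp_cdf hp0.le hp1.le (hF ▸ hcont) hφmeas hφbdd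
  rw [hW, integral_comp_one_sub_ROC p hs hHs hHmono hφmeas, hF]
  field_simp
  linarith

/-- expression of the `W_φ`-ranking performance as a summary of the ROC curve. -/
theorem stmt1 {d : ℕ} (G H : Measure (Fin d → ℝ))
    [IsProbabilityMeasure G] [IsProbabilityMeasure H]
    (p : ℝ) (hp : p ∈ Set.Ioo (0 : ℝ) 1)
    (s : (Fin d → ℝ) → ℝ) (hs : Measurable s)
    (hGs : Continuous (scoreCDF G s)) (hHs : Continuous (scoreCDF H s))
    (hHmono : StrictMono (scoreCDF H s))
    (φ : ℝ → ℝ) (hφmono : MonotoneOn φ (Set.Icc 0 1)) (hφmeas : Measurable φ)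
    (B : ℝ) (hφbdd : ∀ u ∈ Set.Icc (0 : ℝ) 1, |φ u| ≤ B) :
    Wperf G H p φ s
      = (1 / p) * (∫ u in (0 : ℝ)..1, φ u)
        - ((1 - p) / p) *
          ∫ α in (0 : ℝ)..1, φ (p * (1 - ROC G H s α) + (1 - p) * (1 - α)) :=
  stmt1_general G H p hp s hs hGs hHs hHmono φ hφmeas B hφbdd
end
end

section
/- Assume G is absolutely continuous with respect to H and let Ψ = dG/dH be a (Borel measurable, real-valued) version of the likelihood ratio. Let φ : [0,1] → ℝ be bounded, nondecreasing and Borel measurable, and let s : ℝ^d → ℝ be any scoring function such that both F_s and F_Ψ are continuous. Then W_φ(s) ≤ W_φ(Ψ), i.e. the likelihood ratio maximizes the W_φ-ranking performance over all scoring functions with continuous pooled score distribution. -/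
open MeasureTheory

noncomputable section

/-!
Let `F = p G + (1 - p) H` be the pooled law. When the cdf `F_s` of `s` under `F` is continuous,
`F {F_s ∘ s ≥ t} = 1 - t`, and the same holds for `Ψ`, where moreover `{F_Ψ ∘ Ψ ≥ t}` is an upper
level set `{Ψ ≥ r}` of the likelihood ratio. By the Neyman–Pearson lemma such a level set has
the largest `G`-mass among all sets of no larger pooled mass, so
`G {F_s ∘ s ≥ t} ≤ G {F_Ψ ∘ Ψ ≥ t}` for every `t`: under `G`, `F_Ψ ∘ Ψ` stochastically dominates
`F_s ∘ s`. By the layer cake formula, stochastic dominance passes to expectations of bounded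
monotone functions.
-/

open MeasureTheory ProbabilityTheory Set
open scoped ENNReal

section StochasticDominance

variable {Ω : Type*} [MeasurableSpace Ω] {μ : Measure Ω} {U V : Ω → ℝ}

lemma measure_lt_le_of_forall_measure_le (hdom : ∀ t, μ {x | t ≤ U x} ≤ μ {x | t ≤ V x})
    (t : ℝ) : μ {x | t < U x} ≤ μ {x | t < V x} := by
  set S : ℕ → Set Ω := fun n => {x | t + 1 / ((n : ℝ) + 1) ≤ U x}
  have hS : Monotone S := fun m n hmn x hx =>
    le_trans (add_le_add_right (Nat.one_div_le_one_div hmn) t) hx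
  have hUnion : {x | t < U x} = ⋃ n, S n := by
    ext x
    simp only [S, mem_ofPred_eq, mem_iUnion]
    refine ⟨fun h => ?_, fun ⟨n, hn⟩ => ?_⟩
    · obtain ⟨n, hn⟩ := exists_nat_one_div_lt (sub_pos.2 h)
      exact ⟨n, by linarith⟩
    · linarith [Nat.one_div_pos_of_nat (α := ℝ) (n := n)]
  rw [hUnion, hS.measure_iUnion]
  refine iSup_le fun n => (hdom _).trans (measure_mono fun x hx => ?_)
  exact lt_of_lt_of_le (lt_add_of_pos_right t Nat.one_div_pos_of_nat) hx

lemma measure_preimage_le_of_isUpperSet (hdom : ∀ t, μ {x | t ≤ U x} ≤ μ {x | t ≤ V x})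
    {S : Set ℝ} (hS : IsUpperSet S) : μ (U ⁻¹' S) ≤ μ (V ⁻¹' S) := by
  rcases S.eq_empty_or_nonempty with rfl | hne
  · simp
  by_cases hbdd : BddBelow S
  · by_cases hmem : sInf S ∈ S
    · have : S = Ici (sInf S) :=
        Subset.antisymm (fun y hy => csInf_le hbdd hy) (hS.Ici_subset hmem)
      rw [this]
      exact hdom _
    · have : S = Ioi (sInf S) := by
        refine Subset.antisymm (fun y hy => (csInf_le hbdd hy).lt_of_ne ?_) fun y hy => ?_
        · rintro rfl
          exact hmem hy
        · obtain ⟨z, hz, hzy⟩ := exists_lt_of_csInf_lt hne hy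
          exact hS hzy.le hz
      rw [this]
      exact measure_lt_le_of_forall_measure_le hdom _
  · have : S = univ := eq_univ_of_forall fun y => by
      obtain ⟨z, hz, hzy⟩ := not_bddBelow_iff.1 hbdd y
      exact hS hzy.le hz
    simp [this]

lemma lintegral_ofReal_comp_le_of_forall_measure_le (hU : AEMeasurable U μ)
    (hV : AEMeasurable V μ) (hdom : ∀ t, μ {x | t ≤ U x} ≤ μ {x | t ≤ V x}) {f : ℝ → ℝ}
    (hf : Monotone f) (hf₀ : ∀ u, 0 ≤ f u) :
    ∫⁻ x, ENNReal.ofReal (f (U x)) ∂μ ≤ ∫⁻ x, ENNReal.ofReal (f (V x)) ∂μ := by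
  rw [lintegral_eq_lintegral_meas_le μ (ae_of_all _ fun _ => hf₀ _)
      (hf.measurable.comp_aemeasurable hU),
    lintegral_eq_lintegral_meas_le μ (ae_of_all _ fun _ => hf₀ _)
      (hf.measurable.comp_aemeasurable hV)]
  exact lintegral_mono fun t =>
    measure_preimage_le_of_isUpperSet hdom fun _ _ hab (ha : t ≤ f _) => ha.trans (hf hab)

theorem integral_comp_le_of_forall_measure_le [IsFiniteMeasure μ] (hU : AEMeasurable U μ)
    (hV : AEMeasurable V μ) (hdom : ∀ t, μ {x | t ≤ U x} ≤ μ {x | t ≤ V x}) {f : ℝ → ℝ}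
    (hf : Monotone f) {a b : ℝ} (hab : ∀ u, f u ∈ Icc a b) :
    ∫ x, f (U x) ∂μ ≤ ∫ x, f (V x) ∂μ := by
  have hint : ∀ W : Ω → ℝ, AEMeasurable W μ → Integrable (fun x => f (W x)) μ :=
    fun W hW => .of_bound (hf.measurable.comp_aemeasurable hW).aestronglyMeasurable
      (max |a| |b|) (ae_of_all _ fun x => abs_le_max_abs_abs (hab (W x)).1 (hab (W x)).2)
  have hshift : ∫ x, f (U x) - a ∂μ ≤ ∫ x, f (V x) - a ∂μ := by
    rw [integral_eq_lintegral_of_nonneg_ae (ae_of_all _ fun _ => sub_nonneg.2 (hab _).1)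
        ((hint U hU).sub (integrable_const a)).aestronglyMeasurable,
      integral_eq_lintegral_of_nonneg_ae (ae_of_all _ fun _ => sub_nonneg.2 (hab _).1)
        ((hint V hV).sub (integrable_const a)).aestronglyMeasurable]
    exact ENNReal.toReal_mono ((hint V hV).sub (integrable_const a)).lintegral_lt_top.ne
      (lintegral_ofReal_comp_le_of_forall_measure_le hU hV hdom
        (fun u v huv => sub_le_sub_right (hf huv) a) fun u => sub_nonneg.2 (hab u).1)
  rwa [integral_sub (hint U hU) (integrable_const a), integral_sub (hint V hV) (integrable_const a),
    sub_le_sub_iff_right] at hshift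

end StochasticDominance

section NeymanPearson

variable {α : Type*} [MeasurableSpace α] {G H : Measure α} {p : ℝ}

def pooledMeasure (G H : Measure α) (p : ℝ) : Measure α :=
  ENNReal.ofReal p • G + ENNReal.ofReal (1 - p) • H

lemma pooledMeasure_apply (A : Set α) :
    pooledMeasure G H p A = ENNReal.ofReal p * G A + ENNReal.ofReal (1 - p) * H A := rfl

lemma isProbabilityMeasure_pooledMeasure [IsProbabilityMeasure G] [IsProbabilityMeasure H]
    (hp : p ∈ Icc 0 1) : IsProbabilityMeasure (pooledMeasure G H p) := by
  constructor
  rw [pooledMeasure_apply, measure_univ, measure_univ, mul_one, mul_one,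
    ← ENNReal.ofReal_add hp.1 (sub_nonneg.2 hp.2), add_sub_cancel, ENNReal.ofReal_one]

lemma absolutelyContinuous_pooledMeasure (hp : 0 < p) : G ≪ pooledMeasure G H p :=
  (Measure.absolutelyContinuous_smul (ENNReal.ofReal_pos.2 hp).ne').add_right _

lemma neyman_pearson {f : α → ℝ≥0∞} (hG : G = H.withDensity f) {A B : Set α}
    (hA : MeasurableSet A) (hB : MeasurableSet B) {c : ℝ≥0∞} (hfB : ∀ x ∈ B, c ≤ f x)
    (hfBc : ∀ x ∉ B, f x ≤ c) : G A + c * H B ≤ G B + c * H A := by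
  have hAB : G (A \ B) ≤ c * H (A \ B) := by
    rw [hG, withDensity_apply _ (hA.diff hB), ← setLIntegral_const]
    exact setLIntegral_mono measurable_const fun x hx => hfBc x hx.2
  have hBA : c * H (B \ A) ≤ G (B \ A) := by
    rw [hG, withDensity_apply _ (hB.diff hA), ← setLIntegral_const]
    exact setLIntegral_mono' (hB.diff hA) fun x hx => hfB x hx.1
  rw [← measure_inter_add_sdiff (μ := G) A hB, ← measure_inter_add_sdiff (μ := G) B hA,
    ← measure_inter_add_sdiff (μ := H) A hB, ← measure_inter_add_sdiff (μ := H) B hA,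
    inter_comm B A]
  calc G (A ∩ B) + G (A \ B) + c * (H (A ∩ B) + H (B \ A))
      = G (A ∩ B) + c * H (A ∩ B) + G (A \ B) + c * H (B \ A) := by ring
    _ ≤ G (A ∩ B) + c * H (A ∩ B) + c * H (A \ B) + G (B \ A) := by gcongr
    _ = G (A ∩ B) + G (B \ A) + c * (H (A ∩ B) + H (A \ B)) := by ring

lemma measure_le_of_pooledMeasure_le [IsFiniteMeasure G] [IsFiniteMeasure H]
    (hp : p ∈ Ico 0 1) {f : α → ℝ≥0∞} (hG : G = H.withDensity f) {A B : Set α}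
    (hA : MeasurableSet A) (hB : MeasurableSet B) {c : ℝ≥0∞} (hc : c ≠ ∞)
    (hfB : ∀ x ∈ B, c ≤ f x) (hfBc : ∀ x ∉ B, f x ≤ c)
    (hpooled : pooledMeasure G H p A ≤ pooledMeasure G H p B) : G A ≤ G B := by
  have hNP := ENNReal.toReal_mono (by finiteness) (neyman_pearson hG hA hB hfB hfBc)
  rw [pooledMeasure_apply, pooledMeasure_apply] at hpooled
  have hpooled' := ENNReal.toReal_mono (by finiteness) hpooled
  rw [ENNReal.toReal_add (by finiteness) (by finiteness),
    ENNReal.toReal_add (by finiteness) (by finiteness)] at hNP hpooled'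
  simp only [ENNReal.toReal_mul, ENNReal.toReal_ofReal hp.1,
    ENNReal.toReal_ofReal (sub_nonneg.2 hp.2.le)] at hNP hpooled'
  rw [← ENNReal.toReal_le_toReal (by finiteness) (by finiteness)]
  have hc₀ : 0 ≤ c.toReal := ENNReal.toReal_nonneg
  have hweight : 0 < 1 - p + c.toReal * p := by nlinarith [hp.1, hp.2]
  have hcomb : (1 - p + c.toReal * p) * ((G A).toReal - (G B).toReal) ≤ 0 := by
    nlinarith [mul_le_mul_of_nonneg_left hNP (sub_nonneg.2 hp.2.le),
      mul_le_mul_of_nonneg_left hpooled' hc₀]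
  exact sub_nonpos.1 ((mul_nonpos_iff_pos_imp_nonpos.1 hcomb).1 hweight)

end NeymanPearson

lemma Monotone.exists_eq_and_setOf_le_eq_Ici {f : ℝ → ℝ} (hf : Monotone f) (hfc : Continuous f)
    {t : ℝ} (h₀ : ∃ y, f y < t) (h₁ : ∃ y, t ≤ f y) :
    ∃ q, f q = t ∧ {y | t ≤ f y} = Ici q := by
  obtain ⟨y₀, hy₀⟩ := h₀
  set S := {y | t ≤ f y}
  have hlt : ∀ y ∈ S, y₀ < y := fun y hy => lt_of_not_ge fun h => (hy.trans (hf h)).not_gt hy₀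
  have hbdd : BddBelow S := ⟨y₀, fun y hy => (hlt y hy).le⟩
  have hq : sInf S ∈ S := (isClosed_le continuous_const hfc).csInf_mem h₁ hbdd
  refine ⟨sInf S, ?_, Subset.antisymm (fun y hy => csInf_le hbdd hy) fun y hy => hq.trans (hf hy)⟩
  obtain ⟨c, hc, hfc⟩ :=
    intermediate_value_Icc (hlt _ hq).le hfc.continuousOn ⟨hy₀.le, (hq : t ≤ _)⟩
  rwa [le_antisymm hc.2 (csInf_le hbdd (show t ≤ f c from hfc.ge))] at hfc

section CDF

variable {ν : Measure ℝ} {t : ℝ}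

lemma nullSingletonClass_of_continuous_cdf [IsProbabilityMeasure ν] (hν : Continuous (cdf ν)) :
    NullSingletonClass ν where
  measure_singleton x := by
    have : ν {x} = (cdf ν).measure {x} := by rw [measure_cdf]
    rw [this, StieltjesFunction.measure_singleton, hν.continuousWithinAt.leftLim_eq, sub_self,
      ENNReal.ofReal_zero]

lemma exists_cdf_eq_and_setOf_le_cdf_eq_Ici (hν : Continuous (cdf ν)) (ht : 0 < t)
    (h₁ : ∃ y, t ≤ cdf ν y) : ∃ q, cdf ν q = t ∧ {y | t ≤ cdf ν y} = Ici q :=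
  (monotone_cdf ν).exists_eq_and_setOf_le_eq_Ici hν
    ((tendsto_cdf_atBot ν).eventually (eventually_lt_nhds ht)).exists h₁

lemma measure_setOf_le_cdf [IsProbabilityMeasure ν] (hν : Continuous (cdf ν)) (ht : 0 < t) :
    ν {y | t ≤ cdf ν y} = ENNReal.ofReal (1 - t) := by
  by_cases h₁ : ∃ y, t ≤ cdf ν y
  · obtain ⟨q, hq, hS⟩ := exists_cdf_eq_and_setOf_le_cdf_eq_Ici hν ht h₁
    have := nullSingletonClass_of_continuous_cdf hν
    rw [hS, ← measure_congr Ioi_ae_eq_Ici, ← compl_Iic, prob_compl_eq_one_sub measurableSet_Iic,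
      ← ofReal_cdf, hq, ENNReal.ofReal_sub _ ht.le, ENNReal.ofReal_one]
  · simp only [not_exists, not_le] at h₁
    have ht₁ : 1 ≤ t := le_of_tendsto' (tendsto_cdf_atTop ν) fun y => (h₁ y).le
    have hS : {y | t ≤ cdf ν y} = ∅ := eq_empty_of_forall_notMem fun y hy => (h₁ y).not_ge hy
    rw [hS, measure_empty, ENNReal.ofReal_of_nonpos (sub_nonpos.2 ht₁)]

end CDF

section PooledScore

variable {d : ℕ} {G H : Measure (Fin d → ℝ)} [IsProbabilityMeasure G] [IsProbabilityMeasure H]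
  {p : ℝ} {s : (Fin d → ℝ) → ℝ}

lemma pooledCDF_eq_cdf_s2 (hp : p ∈ Icc 0 1) (hs : Measurable s) :
    pooledCDF G H p s = cdf ((pooledMeasure G H p).map s) := by
  have := isProbabilityMeasure_pooledMeasure (G := G) (H := H) hp
  have := Measure.isProbabilityMeasure_map (μ := pooledMeasure G H p) hs.aemeasurable
  ext t
  rw [cdf_eq_real, measureReal_def, Measure.map_apply hs measurableSet_Iic, pooledMeasure_apply,
    ENNReal.toReal_add (by finiteness) (by finiteness), ENNReal.toReal_mul, ENNReal.toReal_mul,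
    ENNReal.toReal_ofReal hp.1, ENNReal.toReal_ofReal (sub_nonneg.2 hp.2)]
  simp [pooledCDF, scoreCDF, Measure.map_apply hs measurableSet_Iic]

lemma pooledCDF_mem_Icc (hp : p ∈ Icc 0 1) (hs : Measurable s) (y : ℝ) :
    pooledCDF G H p s y ∈ Icc 0 1 := by
  rw [pooledCDF_eq_cdf_s2 hp hs]
  exact ⟨cdf_nonneg _ y, cdf_le_one _ y⟩

lemma pooledMeasure_setOf_le_pooledCDF (hp : p ∈ Icc 0 1) (hs : Measurable s)
    (hFs : Continuous (pooledCDF G H p s)) {t : ℝ} (ht : 0 < t) :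
    pooledMeasure G H p {x | t ≤ pooledCDF G H p s (s x)} = ENNReal.ofReal (1 - t) := by
  have := isProbabilityMeasure_pooledMeasure (G := G) (H := H) hp
  have := Measure.isProbabilityMeasure_map (μ := pooledMeasure G H p) hs.aemeasurable
  rw [pooledCDF_eq_cdf_s2 hp hs] at hFs ⊢
  rw [← measure_setOf_le_cdf hFs ht,
    Measure.map_apply hs (measurableSet_le measurable_const hFs.measurable)]
  rfl

lemma measure_setOf_le_pooledCDF_le_of_withDensity (hp : p ∈ Ioo 0 1) {Ψ : (Fin d → ℝ) → ℝ}
    (hΨm : Measurable Ψ) (hΨ : G = H.withDensity fun x => ENNReal.ofReal (Ψ x)) (hs : Measurable s)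
    (hFs : Continuous (pooledCDF G H p s)) (hFΨ : Continuous (pooledCDF G H p Ψ)) (t : ℝ) :
    G {x | t ≤ pooledCDF G H p s (s x)} ≤ G {x | t ≤ pooledCDF G H p Ψ (Ψ x)} := by
  have hp' : p ∈ Icc 0 1 := Ioo_subset_Icc_self hp
  rcases le_or_gt t 0 with ht | ht
  · exact measure_mono fun x _ => ht.trans (pooledCDF_mem_Icc hp' hΨm _).1
  have hpooled : pooledMeasure G H p {x | t ≤ pooledCDF G H p s (s x)} ≤
      pooledMeasure G H p {x | t ≤ pooledCDF G H p Ψ (Ψ x)} := by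
    rw [pooledMeasure_setOf_le_pooledCDF hp' hs hFs ht,
      pooledMeasure_setOf_le_pooledCDF hp' hΨm hFΨ ht]
  have hA : MeasurableSet {x | t ≤ pooledCDF G H p s (s x)} :=
    measurableSet_le measurable_const (hFs.measurable.comp hs)
  rw [pooledCDF_eq_cdf_s2 hp' hΨm] at hFΨ hpooled ⊢
  by_cases h₁ : ∃ y, t ≤ cdf ((pooledMeasure G H p).map Ψ) y
  · obtain ⟨r, -, hr⟩ := exists_cdf_eq_and_setOf_le_cdf_eq_Ici hFΨ ht h₁
    have hB : {x | t ≤ cdf ((pooledMeasure G H p).map Ψ) (Ψ x)} = {x | r ≤ Ψ x} :=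
      congrArg (Ψ ⁻¹' ·) hr
    rw [hB] at hpooled ⊢
    exact measure_le_of_pooledMeasure_le ⟨hp.1.le, hp.2⟩ hΨ hA
      (measurableSet_le measurable_const hΨm) ENNReal.ofReal_ne_top
      (fun x hx => ENNReal.ofReal_le_ofReal hx)
      (fun x hx => ENNReal.ofReal_le_ofReal (not_le.1 hx).le) hpooled
  · simp only [not_exists, not_le] at h₁
    have hB : {x | t ≤ cdf ((pooledMeasure G H p).map Ψ) (Ψ x)} = ∅ :=
      eq_empty_of_forall_notMem fun x hx => (h₁ _).not_ge hx
    rw [hB, measure_empty, nonpos_iff_eq_zero] at hpooled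
    exact (absolutelyContinuous_pooledMeasure hp.1 hpooled).trans_le zero_le

end PooledScore

theorem stmt2_general {d : ℕ} (G H : Measure (Fin d → ℝ))
    [IsProbabilityMeasure G] [IsProbabilityMeasure H]
    (p : ℝ) (hp : p ∈ Set.Ioo (0 : ℝ) 1)
    (Ψ : (Fin d → ℝ) → ℝ) (hΨmeas : Measurable Ψ)
    (hΨ : G = H.withDensity fun x => ENNReal.ofReal (Ψ x))
    (φ : ℝ → ℝ) (hφmono : MonotoneOn φ (Set.Icc 0 1))
    (s : (Fin d → ℝ) → ℝ) (hs : Measurable s)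
    (hFs : Continuous (pooledCDF G H p s))
    (hFΨ : Continuous (pooledCDF G H p Ψ)) :
    Wperf G H p φ s ≤ Wperf G H p φ Ψ := by
  have hp' : p ∈ Icc 0 1 := Ioo_subset_Icc_self hp
  set φ' : ℝ → ℝ := fun u => φ (projIcc 0 1 zero_le_one u)
  have hφ' : Monotone φ' := fun u v huv =>
    hφmono (projIcc 0 1 _ u).2 (projIcc 0 1 _ v).2 (monotone_projIcc _ huv)
  have hφ'_mem : ∀ u, φ' u ∈ Icc (φ 0) (φ 1) := fun u =>
    ⟨hφmono (left_mem_Icc.2 zero_le_one) (projIcc 0 1 _ u).2 (projIcc 0 1 _ u).2.1,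
      hφmono (projIcc 0 1 _ u).2 (right_mem_Icc.2 zero_le_one) (projIcc 0 1 _ u).2.2⟩
  have hWperf : ∀ {W : (Fin d → ℝ) → ℝ}, Measurable W →
      Wperf G H p φ W = ∫ x, φ' (pooledCDF G H p W (W x)) ∂G := fun hW => by
    simp only [Wperf, φ', projIcc_of_mem _ (pooledCDF_mem_Icc hp' hW _)]
  rw [hWperf hs, hWperf hΨmeas]
  exact integral_comp_le_of_forall_measure_le (hFs.measurable.comp hs).aemeasurable
    (hFΨ.measurable.comp hΨmeas).aemeasurable
    (measure_setOf_le_pooledCDF_le_of_withDensity hp hΨmeas hΨ hs hFs hFΨ) hφ' hφ'_mem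

/-- the likelihood ratio `Ψ = dG/dH` maximizes the `W_φ`-ranking performance
over all scoring functions with continuous pooled score distribution. -/
theorem stmt2 {d : ℕ} (G H : Measure (Fin d → ℝ))
    [IsProbabilityMeasure G] [IsProbabilityMeasure H]
    (p : ℝ) (hp : p ∈ Set.Ioo (0 : ℝ) 1)
    (Ψ : (Fin d → ℝ) → ℝ) (hΨmeas : Measurable Ψ)
    (hac : G ≪ H)
    (hΨ : G = H.withDensity fun x => ENNReal.ofReal (Ψ x))
    (φ : ℝ → ℝ) (hφmono : MonotoneOn φ (Set.Icc 0 1)) (hφmeas : Measurable φ)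
    (B : ℝ) (hφbdd : ∀ u ∈ Set.Icc (0 : ℝ) 1, |φ u| ≤ B)
    (s : (Fin d → ℝ) → ℝ) (hs : Measurable s)
    (hFs : Continuous (pooledCDF G H p s))
    (hFΨ : Continuous (pooledCDF G H p Ψ)) :
    Wperf G H p φ s ≤ Wperf G H p φ Ψ :=
  stmt2_general G H p hp Ψ hΨmeas hΨ φ hφmono s hs hFs hFΨ
end
end

section
/- Suppose φ satisfies Assumption A2, S₀ is a countable class of scoring functions satisfying Assumption A1(M) for some M > 0, and write ‖φ‖_∞, ‖φ'‖_∞, ‖φ''‖_∞ for the sup-norms of φ, φ', φ'' over [0,1]. Then for every t > 0, P{ sup_{s∈S₀} |W_φ(s) − Ŵ^φ_{n,m}(s)/n| ≥ E[ sup_{s∈S₀} |W_φ(s) − Ŵ^φ_{n,m}(s)/n| ] + t } ≤ exp( − p²·N·t² / ( 6·(‖φ‖_∞² + 9·‖φ'‖_∞² + 9·‖φ''‖_∞²) ) ). -/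
open MeasureTheory
open scoped ENNReal

noncomputable section

/-- rank of `x i` in the pooled sample. -/
def Rank {n m : ℕ} (x : Fin n → ℝ) (y : Fin m → ℝ) (i : Fin n) : ℕ :=
  (Finset.univ.filter fun k => x k ≤ x i).card +
    (Finset.univ.filter fun j => y j ≤ x i).card

/-- two-sample linear rank statistic `Ŵ^φ_{n,m}`. -/
def Wemp {n m : ℕ} (φ : ℝ → ℝ) (x : Fin n → ℝ) (y : Fin m → ℝ) : ℝ :=
  ∑ i : Fin n, φ ((Rank x y i : ℝ) / ((n : ℝ) + (m : ℝ) + 1))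

/-- Assumption A1(M): the score distribution has a twice differentiable Lebesgue
density with all sup-norms bounded by `M`. -/
def HasSmoothDensity {d : ℕ} (μ : Measure (Fin d → ℝ)) (s : (Fin d → ℝ) → ℝ)
    (M : ℝ) : Prop :=
  ∃ f f1 f2 : ℝ → ℝ,
    μ.map s = MeasureTheory.volume.withDensity (fun t => ENNReal.ofReal (f t)) ∧
    (∀ t, HasDerivAt f (f1 t) t) ∧ (∀ t, HasDerivAt f1 (f2 t) t) ∧
    (∀ t, |f t| ≤ M ∧ |f1 t| ≤ M ∧ |f2 t| ≤ M)


/-- sup-norm over `[0,1]`. -/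
def supNormIcc (f : ℝ → ℝ) : ℝ :=
  ⨆ u : Set.Icc (0 : ℝ) 1, |f u|

/-! Regard the supremum deviation `Z = sup_{s ∈ S₀} |W_φ(s) - Ŵ^φ_{n,m}(s)/n|` as a function of
the `n + m` independent sample points. Replacing one point `X_i` moves the rank of `X_i`
arbitrarily but every other rank by at most one, so by the Lipschitz continuity of `φ` each
`Ŵ^φ_{n,m}(s)/n` moves by at most `2‖φ'‖_∞/n`; replacing one `Y_j` moves every rank by at most
one, hence `Ŵ^φ_{n,m}(s)/n` by at most `‖φ'‖_∞/n`. A supremum inherits these bounded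
differences, so McDiarmid's inequality (Hoeffding's lemma in one coordinate at a time, tensorised
over the product measure) makes `Z - E Z` sub-Gaussian with variance proxy
`n (2‖φ'‖_∞/n)² + m (‖φ'‖_∞/n)² ≤ 12 ‖φ'‖_∞² / (p² N)`, using `pN/2 ≤ n`. The Chernoff bound
concludes. -/

open ProbabilityTheory Real
open scoped NNReal

lemma abs_ciSup_sub_ciSup_le {κ : Sort*} {f g : κ → ℝ} {c : ℝ} (hc : 0 ≤ c)
    (hf : BddAbove (Set.range f)) (hg : BddAbove (Set.range g)) (h : ∀ k, |f k - g k| ≤ c) :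
    |(⨆ k, f k) - ⨆ k, g k| ≤ c := by
  rcases isEmpty_or_nonempty κ with _ | _
  · simpa using hc
  rw [abs_sub_le_iff, sub_le_iff_le_add, sub_le_iff_le_add]
  constructor <;> refine ciSup_le fun k => ?_
  · linarith [(abs_sub_le_iff.mp (h k)).1, le_ciSup hg k]
  · linarith [(abs_sub_le_iff.mp (h k)).2, le_ciSup hf k]

def HasBoundedDifferences {ι E : Type*} [DecidableEq ι] (f : (ι → E) → ℝ) (c : ℝ) : Prop :=
  ∀ x i a, |f (Function.update x i a) - f x| ≤ c

namespace HasBoundedDifferences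

variable {ι E : Type*} [DecidableEq ι] {f : (ι → E) → ℝ} {c : ℝ}

lemma comp_coord {E' : Type*} (h : HasBoundedDifferences f c) (s : E' → E) :
    HasBoundedDifferences (fun x => f (s ∘ x)) c := fun x i a => by
  simpa [Function.comp_update] using h (s ∘ x) i (s a)

lemma abs_const_sub_div (h : HasBoundedDifferences f c) (b : ℝ) {r : ℝ} (hr : 0 ≤ r) :
    HasBoundedDifferences (fun x => |b - f x / r|) (c / r) := fun x i a => by
  refine (abs_abs_sub_abs_le_abs_sub _ _).trans ?_
  rw [sub_sub_sub_cancel_left, ← sub_div, abs_div, abs_of_nonneg hr, abs_sub_comm]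
  exact div_le_div_of_nonneg_right (h x i a) hr

lemma ciSup {κ : Sort*} {F : κ → (ι → E) → ℝ} (hc : 0 ≤ c)
    (hF : ∀ k, HasBoundedDifferences (F k) c)
    (hbdd : ∀ x, BddAbove (Set.range fun k => F k x)) :
    HasBoundedDifferences (fun x => ⨆ k, F k x) c := fun x i a =>
  abs_ciSup_sub_ciSup_le hc (hbdd _) (hbdd _) fun k => hF k x i a

end HasBoundedDifferences

section Concentration

variable {α β : Type*} [MeasurableSpace α] [MeasurableSpace β]

lemma ProbabilityTheory.HasSubgaussianMGF.mono {μ : Measure α} {X : α → ℝ} {c c' : ℝ≥0}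
    (h : HasSubgaussianMGF X c μ) (hc : c ≤ c') : HasSubgaussianMGF X c' μ where
  integrable_exp_mul := h.integrable_exp_mul
  mgf_le t := (h.mgf_le t).trans (exp_le_exp.mpr (by gcongr))

variable {μ : Measure α} [IsProbabilityMeasure μ]

lemma abs_integral_le_of_abs_le {f : α → ℝ} {C : ℝ} (hf : ∀ x, |f x| ≤ C) :
    |∫ x, f x ∂μ| ≤ C := by
  simpa using norm_integral_le_of_norm_le_const (μ := μ)
    (ae_of_all _ fun x => (Real.norm_eq_abs _).trans_le (hf x))

lemma hasSubgaussianMGF_sub_integral_of_abs_sub_le {f : α → ℝ} (hf : Measurable f) {c : ℝ≥0}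
    (hc : ∀ x x', |f x - f x'| ≤ c) :
    HasSubgaussianMGF (fun x => f x - ∫ x', f x' ∂μ) (c ^ 2) μ := by
  obtain ⟨x₀⟩ := nonempty_of_isProbabilityMeasure μ
  have hmem (x : α) : f x ∈ Set.Icc (f x₀ - c) (f x₀ + c) :=
    ⟨by linarith [(abs_le.mp (hc x x₀)).1], by linarith [(abs_le.mp (hc x x₀)).2]⟩
  convert hasSubgaussianMGF_of_mem_Icc hf.aemeasurable (ae_of_all μ hmem) using 2
  ext
  simp [Real.norm_eq_abs, abs_of_nonneg]

lemma HasBoundedDifferences.integral {ι E : Type*} [DecidableEq ι] [MeasurableSpace E]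
    {f : α × (ι → E) → ℝ} (hf : Measurable f) {C : ℝ} (hC : ∀ z, |f z| ≤ C) {c : ℝ}
    (h : ∀ x, HasBoundedDifferences (fun y => f (x, y)) c) :
    HasBoundedDifferences (fun y => ∫ x, f (x, y) ∂μ) c := by
  intro y i a
  have hint (y : ι → E) : Integrable (fun x => f (x, y)) μ :=
    .of_bound (hf.comp measurable_prodMk_right).aestronglyMeasurable C (ae_of_all _ fun _ => hC _)
  rw [← integral_sub (hint _) (hint _)]
  exact abs_integral_le_of_abs_le fun x => h x y i a

variable {ν : Measure β} [IsProbabilityMeasure ν]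

lemma hasSubgaussianMGF_sub_integral_prod {f : α × β → ℝ} (hf : Measurable f) {C : ℝ}
    (hC : ∀ z, |f z| ≤ C) {c₁ c₂ : ℝ≥0}
    (h₁ : ∀ y, HasSubgaussianMGF (fun x => f (x, y) - ∫ x', f (x', y) ∂μ) c₁ μ)
    (h₂ : HasSubgaussianMGF (fun y => ∫ x, f (x, y) ∂μ - ∫ y', ∫ x, f (x, y') ∂μ ∂ν) c₂ ν) :
    HasSubgaussianMGF (fun z => f z - ∫ z', f z' ∂(μ.prod ν)) (c₁ + c₂) (μ.prod ν) := by
  set g : β → ℝ := fun y => ∫ x, f (x, y) ∂μ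
  rw [integral_prod_symm f (.of_bound hf.aestronglyMeasurable C (ae_of_all _ hC))]
  set E := ∫ y, g y ∂ν
  have hint (t : ℝ) : Integrable (fun z => exp (t * (f z - E))) (μ.prod ν) :=
    integrable_exp_mul_of_mem_Icc (a := -C - E) (b := C - E) (hf.sub_const E).aemeasurable
      (ae_of_all _ fun z =>
        ⟨by linarith [(abs_le.mp (hC z)).1], by linarith [(abs_le.mp (hC z)).2]⟩)
  refine ⟨hint, fun t => ?_⟩
  calc mgf (fun z => f z - E) (μ.prod ν) t
      = ∫ y, ∫ x, exp (t * (f (x, y) - E)) ∂μ ∂ν := integral_prod_symm _ (hint t)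
    _ = ∫ y, mgf (fun x => f (x, y) - g y) μ t * exp (t * (g y - E)) ∂ν := by
        refine integral_congr_ae (ae_of_all _ fun y => ?_)
        simp only [mgf, ← integral_mul_const, ← exp_add]
        congr 1 with x
        congr 1
        ring
    _ ≤ ∫ y, exp (c₁ * t ^ 2 / 2) * exp (t * (g y - E)) ∂ν :=
        integral_mono_of_nonneg (ae_of_all _ fun y => mul_nonneg mgf_nonneg (exp_nonneg _))
          ((h₂.integrable_exp_mul t).const_mul _)
          (ae_of_all _ fun y => mul_le_mul_of_nonneg_right ((h₁ y).mgf_le t) (exp_nonneg _))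
    _ = exp (c₁ * t ^ 2 / 2) * mgf (fun y => g y - E) ν t := integral_const_mul _ _
    _ ≤ exp (c₁ * t ^ 2 / 2) * exp (c₂ * t ^ 2 / 2) := by gcongr; exact h₂.mgf_le t
    _ = exp ((c₁ + c₂ : ℝ≥0) * t ^ 2 / 2) := by rw [← exp_add]; push_cast; ring_nf

end Concentration

section McDiarmid

variable {E E' : Type*} [MeasurableSpace E] [MeasurableSpace E'] (μ : Measure E)
  (ν : Measure E') [IsProbabilityMeasure μ] [IsProbabilityMeasure ν]

theorem hasSubgaussianMGF_sub_integral_pi {C : ℝ} {c : ℝ≥0} :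
    ∀ {k : ℕ} {f : (Fin k → E) → ℝ}, Measurable f → (∀ x, |f x| ≤ C) →
      HasBoundedDifferences f c →
      HasSubgaussianMGF (fun x => f x - ∫ x', f x' ∂Measure.pi fun _ => μ) (k * c ^ 2)
        (Measure.pi fun _ => μ)
  | 0, f, hf, _, _ => by
    simpa using hasSubgaussianMGF_sub_integral_of_abs_sub_le (μ := Measure.pi fun _ => μ) hf
      (c := 0) fun x x' => by simp [Subsingleton.elim x x']
  | k + 1, f, hf, hC, hdiff => by
    let e := MeasurableEquiv.piFinSuccAbove (fun _ : Fin (k + 1) => E) 0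
    have he : MeasurePreserving e (Measure.pi fun _ => μ) (μ.prod (Measure.pi fun _ => μ)) :=
      measurePreserving_piFinSuccAbove (fun _ => μ) 0
    set F : E × (Fin k → E) → ℝ := f ∘ e.symm
    have hF : Measurable F := hf.comp e.symm.measurable
    have hF_apply (v : E) (y : Fin k → E) : F (v, y) = f (Fin.cons v y) := by
      simp [F, e, MeasurableEquiv.piFinSuccAbove_symm_apply, Fin.consEquiv]
    have hF_head (y : Fin k → E) (v v' : E) : |F (v, y) - F (v', y)| ≤ c := by
      simpa [hF_apply, abs_sub_comm, Fin.update_cons_zero] using hdiff (Fin.cons v y) 0 v'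
    have hF_tail (v : E) : HasBoundedDifferences (fun y => F (v, y)) c := fun y i a => by
      simpa [hF_apply, Fin.cons_update] using hdiff (Fin.cons v y) i.succ a
    have hsum := hasSubgaussianMGF_sub_integral_prod (μ := μ) (ν := Measure.pi fun _ => μ) hF
      (fun _ => hC _)
      (fun y => hasSubgaussianMGF_sub_integral_of_abs_sub_le (hF.comp measurable_prodMk_right)
        (hF_head y))
      (hasSubgaussianMGF_sub_integral_pi hF.stronglyMeasurable.integral_prod_left'.measurable
        (fun _ => abs_integral_le_of_abs_le (μ := μ) fun _ => hC _)
        (HasBoundedDifferences.integral (μ := μ) hF (fun _ => hC _) hF_tail))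
    rw [← he.integral_comp' F, ← he.map_eq] at hsum
    convert hsum.of_map e.measurable.aemeasurable using 1
    · ext x
      simp [F]
    · push_cast
      ring

theorem hasSubgaussianMGF_sub_integral_prod_pi {n m : ℕ} {f : (Fin n → E) × (Fin m → E') → ℝ}
    (hf : Measurable f) {C : ℝ} (hC : ∀ z, |f z| ≤ C) {c₁ c₂ : ℝ≥0}
    (h₁ : ∀ y, HasBoundedDifferences (fun x => f (x, y)) c₁)
    (h₂ : ∀ x, HasBoundedDifferences (fun y => f (x, y)) c₂) :
    HasSubgaussianMGF
      (fun z => f z - ∫ z', f z' ∂((Measure.pi fun _ => μ).prod (Measure.pi fun _ => ν)))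
      (n * c₁ ^ 2 + m * c₂ ^ 2) ((Measure.pi fun _ => μ).prod (Measure.pi fun _ => ν)) :=
  hasSubgaussianMGF_sub_integral_prod hf hC
    (fun y => hasSubgaussianMGF_sub_integral_pi μ (hf.comp measurable_prodMk_right)
      (fun _ => hC _) (h₁ y))
    (hasSubgaussianMGF_sub_integral_pi ν hf.stronglyMeasurable.integral_prod_left'.measurable
      (fun _ => abs_integral_le_of_abs_le fun _ => hC _) (HasBoundedDifferences.integral hf hC h₂))

end McDiarmid

lemma MeasureTheory.MeasurePreserving.measure_integral_add_le_le_ofReal_exp {Ω S : Type*}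
    [MeasurableSpace Ω] [MeasurableSpace S] {P : Measure Ω} {Q : Measure S} [IsFiniteMeasure Q]
    {T : Ω → S} (hT : MeasurePreserving T P Q) {Z : S → ℝ} (hZ : Measurable Z) {c : ℝ≥0}
    (hsub : HasSubgaussianMGF (fun z => Z z - ∫ z', Z z' ∂Q) c Q) {t : ℝ} (ht : 0 ≤ t) :
    P {ω | ∫ ω', Z (T ω') ∂P + t ≤ Z (T ω)} ≤ ENNReal.ofReal (exp (-t ^ 2 / (2 * c))) := by
  have hs : MeasurableSet {z | t ≤ Z z - ∫ z', Z z' ∂Q} :=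
    measurableSet_le measurable_const (hZ.sub_const _)
  have hevent : {ω | ∫ ω', Z (T ω') ∂P + t ≤ Z (T ω)} = T ⁻¹' {z | t ≤ Z z - ∫ z', Z z' ∂Q} := by
    rw [← integral_map hT.measurable.aemeasurable hZ.aestronglyMeasurable, hT.map_eq]
    ext ω
    exact (le_sub_iff_add_le' (b := t)).symm
  rw [hevent, hT.measure_preimage hs.nullMeasurableSet, ← ofReal_measureReal]
  exact ENNReal.ofReal_le_ofReal (hsub.measure_ge_le ht)

lemma abs_card_filter_sub_card_filter_le_one {ι : Type*} [Fintype ι] [DecidableEq ι]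
    (p q : ι → Prop) [DecidablePred p] [DecidablePred q] (i : ι) (h : ∀ k ≠ i, p k ↔ q k) :
    |((Finset.univ.filter p).card : ℝ) - (Finset.univ.filter q).card| ≤ 1 := by
  have key (p q : ι → Prop) [DecidablePred p] [DecidablePred q] (h : ∀ k ≠ i, p k ↔ q k) :
      ((Finset.univ.filter p).card : ℝ) ≤ (Finset.univ.filter q).card + 1 := by
    have hsub : Finset.univ.filter p ⊆ insert i (Finset.univ.filter q) := fun k hk => by
      by_cases hki : k = i
      · simp [hki]
      · simp_all
    exact_mod_cast (Finset.card_le_card hsub).trans (Finset.card_insert_le _ _)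
  rw [abs_sub_le_iff]
  constructor
  · linarith [key p q h]
  · linarith [key q p fun k hk => (h k hk).symm]

section RankStatistic

variable {n m : ℕ}

lemma rank_le_add (x : Fin n → ℝ) (y : Fin m → ℝ) (k : Fin n) : (Rank x y k : ℝ) ≤ n + m := by
  have h₁ := Finset.card_filter_le Finset.univ fun k' => x k' ≤ x k
  have h₂ := Finset.card_filter_le Finset.univ fun j => y j ≤ x k
  simp only [Finset.card_univ, Fintype.card_fin] at h₁ h₂
  exact_mod_cast Nat.add_le_add h₁ h₂

lemma abs_rank_sub_rank_le (x x' : Fin n → ℝ) (y y' : Fin m → ℝ) (k : Fin n) :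
    |(Rank x y k : ℝ) - Rank x' y' k| ≤ n + m := by
  have h₀ : (0 : ℝ) ≤ Rank x y k := Nat.cast_nonneg _
  have h₀' : (0 : ℝ) ≤ Rank x' y' k := Nat.cast_nonneg _
  rw [abs_sub_le_iff]
  constructor <;> linarith [rank_le_add x y k, rank_le_add x' y' k]

lemma rank_div_mem_Icc (x : Fin n → ℝ) (y : Fin m → ℝ) (k : Fin n) :
    (Rank x y k : ℝ) / (n + m + 1) ∈ Set.Icc (0 : ℝ) 1 :=
  ⟨by positivity, (div_le_one (by positivity)).mpr (by linarith [rank_le_add x y k])⟩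

lemma abs_rank_update_left_sub_le (x : Fin n → ℝ) (y : Fin m → ℝ) (i : Fin n) (a : ℝ)
    {k : Fin n} (hk : k ≠ i) : |(Rank (Function.update x i a) y k : ℝ) - Rank x y k| ≤ 1 := by
  simp only [Rank, Function.update_of_ne hk, Nat.cast_add, add_sub_add_right_eq_sub]
  exact abs_card_filter_sub_card_filter_le_one _ _ i fun k' hk' => by
    rw [Function.update_of_ne hk']

lemma abs_rank_update_right_sub_le (x : Fin n → ℝ) (y : Fin m → ℝ) (j : Fin m) (a : ℝ)
    (k : Fin n) : |(Rank x (Function.update y j a) k : ℝ) - Rank x y k| ≤ 1 := by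
  simp only [Rank, Nat.cast_add, add_sub_add_left_eq_sub]
  exact abs_card_filter_sub_card_filter_le_one _ _ j fun j' hj' => by
    rw [Function.update_of_ne hj']

lemma measurable_rank (k : Fin n) :
    Measurable fun z : (Fin n → ℝ) × (Fin m → ℝ) => (Rank z.1 z.2 k : ℝ) := by
  simp only [Rank, Nat.cast_add, Finset.natCast_card_filter]
  refine .add (Finset.measurable_sum _ fun k' _ => ?_) (Finset.measurable_sum _ fun j _ => ?_) <;>
    exact Measurable.ite (measurableSet_le (by fun_prop) (by fun_prop)) measurable_const
      measurable_const

variable {φ : ℝ → ℝ}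

lemma measurable_wemp (hφ : Measurable φ) :
    Measurable fun z : (Fin n → ℝ) × (Fin m → ℝ) => Wemp φ z.1 z.2 :=
  Finset.measurable_sum _ fun k _ => hφ.comp ((measurable_rank k).div_const _)

lemma abs_wemp_div_le {B : ℝ} (hφ : ∀ u ∈ Set.Icc (0 : ℝ) 1, |φ u| ≤ B)
    (x : Fin n → ℝ) (y : Fin m → ℝ) : |Wemp φ x y / n| ≤ B := by
  have hB : 0 ≤ B := (abs_nonneg _).trans (hφ 0 (by simp))
  rw [abs_div, Nat.abs_cast]
  refine div_le_of_le_mul₀ (Nat.cast_nonneg n) hB ?_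
  calc |Wemp φ x y| ≤ ∑ k, |φ ((Rank x y k : ℝ) / (n + m + 1))| := Finset.abs_sum_le_sum_abs _ _
    _ ≤ ∑ _k : Fin n, B := Finset.sum_le_sum fun k _ => hφ _ (rank_div_mem_Icc x y k)
    _ = B * n := by simp [mul_comm]

lemma abs_wemp_sub_wemp_le {L : ℝ≥0} (hφ : LipschitzOnWith L φ (Set.Icc 0 1))
    (x x' : Fin n → ℝ) (y y' : Fin m → ℝ) :
    |Wemp φ x y - Wemp φ x' y'|
      ≤ L / (n + m + 1) * ∑ k, |(Rank x y k : ℝ) - Rank x' y' k| := by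
  rw [Wemp, Wemp, ← Finset.sum_sub_distrib, Finset.mul_sum]
  refine (Finset.abs_sum_le_sum_abs _ _).trans (Finset.sum_le_sum fun k _ => ?_)
  have := hφ.dist_le_mul _ (rank_div_mem_Icc x y k) _ (rank_div_mem_Icc x' y' k)
  rw [Real.dist_eq, Real.dist_eq, ← sub_div, abs_div,
    abs_of_pos (by positivity : (0 : ℝ) < n + m + 1)] at this
  exact this.trans_eq (by ring)

lemma hasBoundedDifferences_wemp_left {L : ℝ≥0} (hφ : LipschitzOnWith L φ (Set.Icc 0 1))
    (y : Fin m → ℝ) : HasBoundedDifferences (fun x : Fin n → ℝ => Wemp φ x y) (2 * L) := by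
  intro x i a
  have hsum : ∑ k, |(Rank (Function.update x i a) y k : ℝ) - Rank x y k| ≤ 2 * (n + m + 1) :=
    calc _ ≤ ∑ k, (1 + if k = i then (n + m : ℝ) else 0) := by
          refine Finset.sum_le_sum fun k _ => ?_
          split_ifs with hk
          · linarith [abs_rank_sub_rank_le (Function.update x i a) x y y k]
          · simpa using abs_rank_update_left_sub_le x y i a hk
      _ = n + (n + m) := by simp [Finset.sum_add_distrib]
      _ ≤ 2 * (n + m + 1) := by linarith [(Nat.cast_nonneg m : (0 : ℝ) ≤ m)]
  calc _ ≤ L / (n + m + 1) * ∑ k, |(Rank (Function.update x i a) y k : ℝ) - Rank x y k| :=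
        abs_wemp_sub_wemp_le hφ _ _ _ _
    _ ≤ L / (n + m + 1) * (2 * (n + m + 1)) := by gcongr
    _ = 2 * L := by field_simp

lemma hasBoundedDifferences_wemp_right {L : ℝ≥0} (hφ : LipschitzOnWith L φ (Set.Icc 0 1))
    (x : Fin n → ℝ) : HasBoundedDifferences (fun y : Fin m → ℝ => Wemp φ x y) L := by
  intro y j a
  have hsum : ∑ k, |(Rank x (Function.update y j a) k : ℝ) - Rank x y k| ≤ n + m + 1 :=
    calc _ ≤ ∑ _k : Fin n, (1 : ℝ) :=
          Finset.sum_le_sum fun k _ => abs_rank_update_right_sub_le x y j a k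
      _ ≤ n + m + 1 := by
          simp only [Finset.sum_const, Finset.card_univ, Fintype.card_fin, nsmul_eq_mul, mul_one]
          linarith [(Nat.cast_nonneg m : (0 : ℝ) ≤ m)]
  calc _ ≤ L / (n + m + 1) * ∑ k, |(Rank x (Function.update y j a) k : ℝ) - Rank x y k| :=
        abs_wemp_sub_wemp_le hφ _ _ _ _
    _ ≤ L / (n + m + 1) * (n + m + 1) := by gcongr
    _ = L := by field_simp

end RankStatistic

section Score

variable {d : ℕ}

lemma scoreCDF_mem_Icc (μ : Measure (Fin d → ℝ)) [IsProbabilityMeasure μ]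
    {s : (Fin d → ℝ) → ℝ} (hs : Measurable s) (t : ℝ) : scoreCDF μ s t ∈ Set.Icc (0 : ℝ) 1 := by
  have := Measure.isProbabilityMeasure_map (μ := μ) hs.aemeasurable
  exact ⟨ENNReal.toReal_nonneg,
    ENNReal.toReal_le_of_le_ofReal zero_le_one (by simpa using prob_le_one)⟩

lemma pooledCDF_mem_Icc_s11 (G H : Measure (Fin d → ℝ)) [IsProbabilityMeasure G]
    [IsProbabilityMeasure H] {p : ℝ} (hp0 : 0 ≤ p) (hp1 : p ≤ 1) {s : (Fin d → ℝ) → ℝ}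
    (hs : Measurable s) (t : ℝ) : pooledCDF G H p s t ∈ Set.Icc (0 : ℝ) 1 := by
  obtain ⟨hG₀, hG₁⟩ := scoreCDF_mem_Icc G hs t
  obtain ⟨hH₀, hH₁⟩ := scoreCDF_mem_Icc H hs t
  constructor <;> simp only [pooledCDF] <;> nlinarith

end Score

section Deviation

variable {d n m : ℕ} (G H : Measure (Fin d → ℝ)) (p : ℝ) (φ : ℝ → ℝ)
  (S₀ : Set ((Fin d → ℝ) → ℝ))

/-- `|W_φ(s) - Ŵ^φ_{n,m}(s)/n|` at the samples `z = (X, Y)`. -/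
def deviation (s : (Fin d → ℝ) → ℝ) (z : (Fin n → Fin d → ℝ) × (Fin m → Fin d → ℝ)) : ℝ :=
  |Wperf G H p φ s - Wemp φ (s ∘ z.1) (s ∘ z.2) / n|

def supDeviation (z : (Fin n → Fin d → ℝ) × (Fin m → Fin d → ℝ)) : ℝ :=
  ⨆ s : S₀, deviation G H p φ s z

variable {G H p φ S₀}

lemma measurable_supDeviation (hφ : Measurable φ) (hS : S₀.Countable)
    (hSmeas : ∀ s ∈ S₀, Measurable s) :
    Measurable (supDeviation (n := n) (m := m) G H p φ S₀) := by
  have := hS.to_subtype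
  refine Measurable.iSup fun s => ?_
  have hsample : Measurable fun z : (Fin n → Fin d → ℝ) × (Fin m → Fin d → ℝ) =>
      ((s : (Fin d → ℝ) → ℝ) ∘ z.1, (s : (Fin d → ℝ) → ℝ) ∘ z.2) := by
    have := hSmeas s s.2
    fun_prop
  exact (measurable_const.sub (((measurable_wemp hφ).comp hsample).div_const _)).abs

lemma hasBoundedDifferences_deviation_left {L : ℝ≥0}
    (hφL : LipschitzOnWith L φ (Set.Icc 0 1)) (s : (Fin d → ℝ) → ℝ) (y : Fin m → Fin d → ℝ) :
    HasBoundedDifferences (fun x : Fin n → Fin d → ℝ => deviation G H p φ s (x, y))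
      (2 * L / n) :=
  ((hasBoundedDifferences_wemp_left hφL (s ∘ y)).comp_coord s).abs_const_sub_div _ n.cast_nonneg

lemma hasBoundedDifferences_deviation_right {L : ℝ≥0}
    (hφL : LipschitzOnWith L φ (Set.Icc 0 1)) (s : (Fin d → ℝ) → ℝ) (x : Fin n → Fin d → ℝ) :
    HasBoundedDifferences (fun y : Fin m → Fin d → ℝ => deviation G H p φ s (x, y)) (L / n) :=
  ((hasBoundedDifferences_wemp_right hφL (s ∘ x)).comp_coord s).abs_const_sub_div _ n.cast_nonneg

variable [IsProbabilityMeasure G] [IsProbabilityMeasure H]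

lemma deviation_le {B : ℝ} (hφ : ∀ u ∈ Set.Icc (0 : ℝ) 1, |φ u| ≤ B) (hp0 : 0 ≤ p)
    (hp1 : p ≤ 1) {s : (Fin d → ℝ) → ℝ} (hs : Measurable s)
    (z : (Fin n → Fin d → ℝ) × (Fin m → Fin d → ℝ)) : deviation G H p φ s z ≤ 2 * B := by
  have hWperf : |Wperf G H p φ s| ≤ B :=
    abs_integral_le_of_abs_le fun x => hφ _ (pooledCDF_mem_Icc_s11 G H hp0 hp1 hs _)
  rw [deviation]
  linarith [abs_sub (Wperf G H p φ s) (Wemp φ (s ∘ z.1) (s ∘ z.2) / n),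
    abs_wemp_div_le hφ (s ∘ z.1) (s ∘ z.2)]

lemma abs_supDeviation_le {B : ℝ} (hφ : ∀ u ∈ Set.Icc (0 : ℝ) 1, |φ u| ≤ B) (hp0 : 0 ≤ p)
    (hp1 : p ≤ 1) (hS : ∀ s ∈ S₀, Measurable s)
    (z : (Fin n → Fin d → ℝ) × (Fin m → Fin d → ℝ)) : |supDeviation G H p φ S₀ z| ≤ 2 * B := by
  have hB : 0 ≤ B := (abs_nonneg _).trans (hφ 0 (by simp))
  have h₀ : 0 ≤ supDeviation G H p φ S₀ z := Real.iSup_nonneg fun s => abs_nonneg _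
  rw [abs_of_nonneg h₀]
  exact Real.iSup_le (fun s => deviation_le hφ hp0 hp1 (hS s s.2) z) (by positivity)

lemma hasBoundedDifferences_supDeviation {B : ℝ} {L : ℝ≥0}
    (hφ : ∀ u ∈ Set.Icc (0 : ℝ) 1, |φ u| ≤ B) (hφL : LipschitzOnWith L φ (Set.Icc 0 1))
    (hp0 : 0 ≤ p) (hp1 : p ≤ 1) (hS : ∀ s ∈ S₀, Measurable s) :
    (∀ y : Fin m → Fin d → ℝ, HasBoundedDifferences
      (fun x : Fin n → Fin d → ℝ => supDeviation G H p φ S₀ (x, y)) (2 * L / n)) ∧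
    (∀ x : Fin n → Fin d → ℝ, HasBoundedDifferences
      (fun y : Fin m → Fin d → ℝ => supDeviation G H p φ S₀ (x, y)) (L / n)) := by
  have hbdd (z : (Fin n → Fin d → ℝ) × (Fin m → Fin d → ℝ)) :
      BddAbove (Set.range fun s : S₀ => deviation G H p φ s z) :=
    ⟨2 * B, Set.forall_mem_range.mpr fun s => deviation_le hφ hp0 hp1 (hS s s.2) z⟩
  exact ⟨fun y => .ciSup (by positivity)
      (fun s => hasBoundedDifferences_deviation_left (G := G) (H := H) (p := p) hφL s y)
      fun _ => hbdd _,
    fun x => .ciSup (by positivity)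
      (fun s => hasBoundedDifferences_deviation_right (G := G) (H := H) (p := p) hφL s x)
      fun _ => hbdd _⟩

lemma hasSubgaussianMGF_supDeviation {B : ℝ} {L : ℝ≥0} (hφm : Measurable φ)
    (hφ : ∀ u ∈ Set.Icc (0 : ℝ) 1, |φ u| ≤ B) (hφL : LipschitzOnWith L φ (Set.Icc 0 1))
    (hp0 : 0 ≤ p) (hp1 : p ≤ 1) (hS : S₀.Countable) (hSmeas : ∀ s ∈ S₀, Measurable s) :
    HasSubgaussianMGF (fun z => supDeviation G H p φ S₀ z
        - ∫ z', supDeviation G H p φ S₀ z'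
          ∂((Measure.pi fun _ : Fin n => G).prod (Measure.pi fun _ : Fin m => H)))
      (n * (2 * L / n) ^ 2 + m * (L / n) ^ 2)
      ((Measure.pi fun _ : Fin n => G).prod (Measure.pi fun _ : Fin m => H)) := by
  obtain ⟨hx, hy⟩ :=
    hasBoundedDifferences_supDeviation (G := G) (H := H) (p := p) hφ hφL hp0 hp1 hSmeas
  exact hasSubgaussianMGF_sub_integral_prod_pi G H (measurable_supDeviation hφm hS hSmeas)
    (abs_supDeviation_le hφ hp0 hp1 hSmeas) (by push_cast; exact hx) (by push_cast; exact hy)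

end Deviation

lemma abs_le_supNormIcc {f : ℝ → ℝ} (hf : Continuous f) {u : ℝ}
    (hu : u ∈ Set.Icc (0 : ℝ) 1) : |f u| ≤ supNormIcc f :=
  le_ciSup (f := fun v : Set.Icc (0 : ℝ) 1 => |f v|) (isCompact_range (by fun_prop)).bddAbove
    ⟨u, hu⟩

lemma supNormIcc_nonneg {f : ℝ → ℝ} (hf : Continuous f) : 0 ≤ supNormIcc f :=
  (abs_nonneg _).trans (abs_le_supNormIcc hf (by simp : (0 : ℝ) ∈ Set.Icc (0 : ℝ) 1))

lemma lipschitzOnWith_supNormIcc_deriv {f : ℝ → ℝ} (hf : ContDiff ℝ 1 f) :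
    LipschitzOnWith (supNormIcc (deriv f)).toNNReal f (Set.Icc 0 1) :=
  (convex_Icc 0 1).lipschitzOnWith_of_nnnorm_deriv_le
    (fun x _ => (hf.differentiable one_ne_zero).differentiableAt) fun x hx => by
      rw [← NNReal.coe_le_coe, coe_nnnorm, Real.norm_eq_abs]
      exact (abs_le_supNormIcc (hf.continuous_deriv le_rfl) hx).trans (Real.le_coe_toNNReal _)

lemma sumSq_boundedDifferences_le {p : ℝ} {N n m : ℕ} (hp0 : 0 < p) (hp1 : p ≤ 1)
    (hN : 1 / p ≤ N) (hn : n = ⌊p * N⌋₊) (hm : m = N - n) (L : ℝ) :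
    n * (2 * L / n) ^ 2 + m * (L / n) ^ 2 ≤ 12 * L ^ 2 / (p ^ 2 * N) := by
  have hpN : 1 ≤ p * N := by rwa [div_le_iff₀ hp0, mul_comm] at hN
  have hn₁ : (1 : ℝ) ≤ n := by rw [hn]; exact_mod_cast Nat.le_floor (by exact_mod_cast hpN)
  have hpN_le : p * N ≤ 2 * n := by
    have : p * N < n + 1 := by rw [hn]; exact Nat.lt_floor_add_one _
    linarith
  have hmN : (m : ℝ) ≤ N := by rw [hm]; exact_mod_cast Nat.sub_le N n
  have hN₀ : (0 : ℝ) < N := by nlinarith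
  have hppN : p * (p * N) ≤ 2 * n := by nlinarith
  have hx : 4 * n * (p ^ 2 * N) ≤ 8 * n ^ 2 := by nlinarith
  have hy : m * (p ^ 2 * N) ≤ 4 * n ^ 2 := by
    nlinarith [mul_le_mul hpN_le hpN_le (by positivity) (by positivity)]
  have hsum : n * (2 * L / n) ^ 2 + m * (L / n) ^ 2 = (4 * n + m) * L ^ 2 / n ^ 2 := by
    field_simp
    ring
  rw [hsum, le_div_iff₀ (by positivity), div_mul_eq_mul_div, div_le_iff₀ (by positivity)]
  nlinarith [sq_nonneg L]

theorem stmt11_general (φ : ℝ → ℝ) (hφC2 : ContDiff ℝ 2 φ)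
    (d : ℕ) (G H : Measure (Fin d → ℝ))
    [IsProbabilityMeasure G] [IsProbabilityMeasure H]
    (p : ℝ) (hp0 : 0 < p) (hp1 : p < 1)
    (S₀ : Set ((Fin d → ℝ) → ℝ)) (hcount : S₀.Countable)
    (hSmeas : ∀ s ∈ S₀, Measurable s)
    (N n m : ℕ) (hN : (1 : ℝ) / p ≤ N) (hn : n = ⌊p * (N : ℝ)⌋₊) (hm : m = N - n)
    (Ω : Type) (mΩ : MeasurableSpace Ω) (P : Measure Ω)
    (X : Fin n → Ω → (Fin d → ℝ)) (Y : Fin m → Ω → (Fin d → ℝ))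
    (hXmeas : ∀ i, Measurable (X i)) (hYmeas : ∀ j, Measurable (Y j))
    (hlaw : Measure.map (fun ω => ((fun i => X i ω), (fun j => Y j ω))) P
      = (Measure.pi fun _ : Fin n => G).prod (Measure.pi fun _ : Fin m => H))
    (t : ℝ) (ht : 0 < t) :
    P {ω | (∫ ω', (⨆ s : S₀,
              |Wperf G H p φ s
                - Wemp φ (fun i => (s : (Fin d → ℝ) → ℝ) (X i ω'))
                    (fun j => (s : (Fin d → ℝ) → ℝ) (Y j ω')) / (n : ℝ)|) ∂P) + t
            ≤ ⨆ s : S₀,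
              |Wperf G H p φ s
                - Wemp φ (fun i => (s : (Fin d → ℝ) → ℝ) (X i ω))
                    (fun j => (s : (Fin d → ℝ) → ℝ) (Y j ω)) / (n : ℝ)|}
      ≤ ENNReal.ofReal (Real.exp (-(p ^ 2 * (N : ℝ) * t ^ 2 /
          (6 * (supNormIcc φ ^ 2 + 9 * supNormIcc (deriv φ) ^ 2
            + 9 * supNormIcc (deriv (deriv φ)) ^ 2))))) := by
  set C := supNormIcc φ ^ 2 + 9 * supNormIcc (deriv φ) ^ 2 + 9 * supNormIcc (deriv (deriv φ)) ^ 2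
  set L := (supNormIcc (deriv φ)).toNNReal
  have hsub := hasSubgaussianMGF_supDeviation (G := G) (H := H) (S₀ := S₀) (n := n) (m := m)
    hφC2.continuous.measurable (fun u hu => abs_le_supNormIcc hφC2.continuous hu)
    (lipschitzOnWith_supNormIcc_deriv (hφC2.of_le (by norm_num))) hp0.le hp1.le hcount hSmeas
  have hC : 12 * (L : ℝ) ^ 2 ≤ 3 * C := by
    rw [Real.coe_toNNReal _ (supNormIcc_nonneg (hφC2.continuous_deriv (by norm_num)))]
    nlinarith [sq_nonneg (supNormIcc φ), sq_nonneg (supNormIcc (deriv (deriv φ)))]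
  -- The proxy `3C/(p²N)` reproduces the claimed exponent exactly, also when `C = 0`: there both
  -- exponents are junk divisions by zero, equal to `0`.
  have hc : n * (2 * L / n) ^ 2 + m * (L / n) ^ 2 ≤ (3 * C / (p ^ 2 * N)).toNNReal := by
    rw [← NNReal.coe_le_coe]
    push_cast
    calc _ ≤ 12 * (L : ℝ) ^ 2 / (p ^ 2 * N) := sumSq_boundedDifferences_le hp0 hp1.le hN hn hm L
      _ ≤ 3 * C / (p ^ 2 * N) := by gcongr
      _ ≤ _ := Real.le_coe_toNNReal _
  have hT : MeasurePreserving (fun ω => ((fun i => X i ω), (fun j => Y j ω))) P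
      ((Measure.pi fun _ : Fin n => G).prod (Measure.pi fun _ : Fin m => H)) :=
    ⟨by fun_prop, hlaw⟩
  calc _ ≤ _ := hT.measure_integral_add_le_le_ofReal_exp (measurable_supDeviation
          hφC2.continuous.measurable hcount hSmeas) (hsub.mono hc) ht.le
    _ = _ := by
      rw [Real.coe_toNNReal _ (by positivity), mul_div_assoc', div_div_eq_mul_div]
      ring_nf

/-- bounded-differences concentration of the supremum deviation of the
two-sample rank process around its mean. -/
theorem stmt11 (φ : ℝ → ℝ) (hφmono : MonotoneOn φ (Set.Icc 0 1))
    (hφC2 : ContDiff ℝ 2 φ)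
    (d : ℕ) (G H : Measure (Fin d → ℝ))
    [IsProbabilityMeasure G] [IsProbabilityMeasure H]
    (p : ℝ) (hp0 : 0 < p) (hp1 : p < 1) (M : ℝ) (hM : 0 < M)
    (S₀ : Set ((Fin d → ℝ) → ℝ)) (hcount : S₀.Countable)
    (hSmeas : ∀ s ∈ S₀, Measurable s)
    (hSG : ∀ s ∈ S₀, HasSmoothDensity G s M)
    (hSH : ∀ s ∈ S₀, HasSmoothDensity H s M)
    (N n m : ℕ) (hN : (1 : ℝ) / p ≤ N) (hn : n = ⌊p * (N : ℝ)⌋₊) (hm : m = N - n)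
    (Ω : Type) (mΩ : MeasurableSpace Ω) (P : Measure Ω)
    (hP : IsProbabilityMeasure P)
    (X : Fin n → Ω → (Fin d → ℝ)) (Y : Fin m → Ω → (Fin d → ℝ))
    (hXmeas : ∀ i, Measurable (X i)) (hYmeas : ∀ j, Measurable (Y j))
    (hlaw : Measure.map (fun ω => ((fun i => X i ω), (fun j => Y j ω))) P
      = (Measure.pi fun _ : Fin n => G).prod (Measure.pi fun _ : Fin m => H))
    (t : ℝ) (ht : 0 < t) :
    P {ω | (∫ ω', (⨆ s : S₀,
              |Wperf G H p φ s
                - Wemp φ (fun i => (s : (Fin d → ℝ) → ℝ) (X i ω'))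
                    (fun j => (s : (Fin d → ℝ) → ℝ) (Y j ω')) / (n : ℝ)|) ∂P) + t
            ≤ ⨆ s : S₀,
              |Wperf G H p φ s
                - Wemp φ (fun i => (s : (Fin d → ℝ) → ℝ) (X i ω))
                    (fun j => (s : (Fin d → ℝ) → ℝ) (Y j ω)) / (n : ℝ)|}
      ≤ ENNReal.ofReal (Real.exp (-(p ^ 2 * (N : ℝ) * t ^ 2 /
          (6 * (supNormIcc φ ^ 2 + 9 * supNormIcc (deriv φ) ^ 2
            + 9 * supNormIcc (deriv (deriv φ)) ^ 2))))) :=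
  stmt11_general φ hφC2 d G H p hp0 hp1 S₀ hcount hSmeas N n m hN hn hm Ω mΩ P X Y hXmeas hYmeas
    hlaw t ht
end
end

section
/- Let F be the cumulative distribution function of a real random variable admitting a Lebesgue density f which is differentiable with |f'(t)| ≤ M for all t. Let K : ℝ → ℝ be an integrable kernel with K(−u) = K(u) for all u, ∫ K(u) du = 1 and μ₂ := ∫ u²·|K(u)| du < ∞, and set κ(t) = ∫_{−∞}^t K(u) du and, for h > 0, F̃_h(t) = ∫ κ((t−u)/h) dF(u). Then for every t ∈ ℝ and every h > 0, |F̃_h(t) − F(t)| ≤ (M/2)·h²·μ₂. -/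
/-!
Writing `F` for the cdf, Fubini turns `F̃_h(t)` into `∫ K(v) F(t - h v) dv`. As `F' = f` is
`M`-Lipschitz, `F(t - h v) = F(t) - h v f(t) + R(v)` with `|R(v)| ≤ M h² v² / 2`. Integrating
against `K`, the constant term gives `F(t)` since `∫ K = 1`, and the linear term vanishes since
`K` is even, leaving only the remainder.
-/

open MeasureTheory Set
open scoped Interval

theorem abs_intervalIntegral_sub_mul_le {g : ℝ → ℝ} (hg : Continuous g) {M : ℝ}
    (hlip : ∀ x y, |g y - g x| ≤ M * |y - x|) (x y : ℝ) :
    |(∫ s in x..y, g s) - (y - x) * g x| ≤ M / 2 * (y - x) ^ 2 := by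
  have hconst : (y - x) * g x = ∫ _ in x..y, g x := by simp
  rw [hconst,
    ← intervalIntegral.integral_sub (hg.intervalIntegrable x y) intervalIntegrable_const,
    ← Real.norm_eq_abs, intervalIntegral.norm_integral_eq_norm_integral_uIoc]
  have hbound : Continuous fun s => M * |s - x| ^ 1 := by fun_prop
  calc ‖∫ s in Ι x y, (g s - g x)‖ ≤ ∫ s in Ι x y, M * |s - x| ^ 1 :=
        norm_integral_le_of_norm_le hbound.integrableOn_uIoc
          (Filter.Eventually.of_forall fun s => by simpa using hlip x s)
    _ = M / 2 * (y - x) ^ 2 := by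
        rw [integral_const_mul, integral_pow_abs_sub_uIoc, sq_abs]; ring

theorem integral_setIntegral_Iic_div_eq (μ : Measure ℝ) [IsFiniteMeasure μ] {K : ℝ → ℝ}
    (hK : Integrable K) (t : ℝ) {h : ℝ} (hh : 0 < h) :
    ∫ u, (∫ v in Iic ((t - u) / h), K v) ∂μ = ∫ v, K v * μ.real (Iic (t - h * v)) := by
  set S := {p : ℝ × ℝ | p.1 + h * p.2 ≤ t}
  have hS : MeasurableSet S := measurableSet_le (by fun_prop) measurable_const
  have hint : Integrable (S.indicator fun p => K p.2) (μ.prod volume) :=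
    (hK.comp_snd μ).indicator hS
  calc ∫ u, (∫ v in Iic ((t - u) / h), K v) ∂μ
      = ∫ u, (∫ v, S.indicator (fun p => K p.2) (u, v)) ∂μ := by
        congr 1 with u
        rw [← integral_indicator measurableSet_Iic]
        congr 1 with v
        simp [S, indicator_apply, le_div_iff₀ hh, ← le_sub_iff_add_le', mul_comm]
    _ = ∫ v, ∫ u, S.indicator (fun p => K p.2) (u, v) ∂μ := integral_integral_swap hint
    _ = ∫ v, K v * μ.real (Iic (t - h * v)) := by
        congr 1 with v
        rw [mul_comm, ← smul_eq_mul, ← integral_indicator_const _ measurableSet_Iic]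
        congr 1 with u
        simp [S, indicator_apply, le_sub_iff_add_le]

theorem integral_mul_eq_zero_of_even {K : ℝ → ℝ} (hK : ∀ u, K (-u) = K u) :
    ∫ u, u * K u = 0 := by
  have h := integral_neg_eq_self (fun u => u * K u) volume
  simp only [hK, neg_mul, integral_neg] at h
  linarith

theorem integrable_mul_of_integrable_sq_mul_abs {K : ℝ → ℝ} (hK : Integrable K)
    (hK2 : Integrable fun u => u ^ 2 * |K u|) : Integrable fun u => u * K u := by
  refine (hK.abs.add hK2).mono' (by fun_prop) (Filter.Eventually.of_forall fun u => ?_)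
  have hu : |u| ≤ 1 + u ^ 2 := by nlinarith [sq_nonneg (|u| - 1), sq_abs u]
  calc ‖u * K u‖ = |u| * |K u| := by rw [Real.norm_eq_abs, abs_mul]
    _ ≤ (1 + u ^ 2) * |K u| := by gcongr
    _ = |K u| + u ^ 2 * |K u| := by ring

theorem abs_integral_mul_comp_sub_sub_le {G : ℝ → ℝ} (hG : Measurable G) {t c M : ℝ}
    (htaylor : ∀ y, |G y - G t - (y - t) * c| ≤ M / 2 * (y - t) ^ 2)
    {K : ℝ → ℝ} (hKint : Integrable K) (hKsymm : ∀ u, K (-u) = K u) (hKone : ∫ u, K u = 1)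
    (hKmom : Integrable fun u => u ^ 2 * |K u|) (h : ℝ) :
    |(∫ v, K v * G (t - h * v)) - G t| ≤ M / 2 * h ^ 2 * ∫ u, u ^ 2 * |K u| := by
  set R : ℝ → ℝ := fun v => K v * (G (t - h * v) - G t + h * v * c)
  have hR : ∀ v, ‖R v‖ ≤ M / 2 * h ^ 2 * (v ^ 2 * |K v|) := fun v => by
    have hv := htaylor (t - h * v)
    rw [show G (t - h * v) - G t - (t - h * v - t) * c = G (t - h * v) - G t + h * v * c by ring]
      at hv
    rw [Real.norm_eq_abs, abs_mul]
    calc |K v| * |G (t - h * v) - G t + h * v * c|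
        ≤ |K v| * (M / 2 * (t - h * v - t) ^ 2) := by gcongr
      _ = M / 2 * h ^ 2 * (v ^ 2 * |K v|) := by ring
  have hRint : Integrable R :=
    (hKmom.const_mul _).mono' (by fun_prop) (Filter.Eventually.of_forall hR)
  -- `∫ K = 1` and `∫ v K v = 0` kill the zeroth- and first-order terms.
  have hdecomp : (fun v => K v * G (t - h * v))
      = fun v => R v + K v * G t - h * c * (v * K v) := by ext v; ring
  have hmoment := integrable_mul_of_integrable_sq_mul_abs hKint hKmom
  calc |(∫ v, K v * G (t - h * v)) - G t| = ‖∫ v, R v‖ := by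
        rw [hdecomp, integral_sub (f := fun v => R v + K v * G t)
          (hRint.add (hKint.mul_const _)) (hmoment.const_mul _),
          integral_add hRint (hKint.mul_const _), integral_mul_const, integral_const_mul,
          hKone, integral_mul_eq_zero_of_even hKsymm, Real.norm_eq_abs]
        ring_nf
    _ ≤ ∫ v, M / 2 * h ^ 2 * (v ^ 2 * |K v|) :=
        norm_integral_le_of_norm_le (hKmom.const_mul _) (Filter.Eventually.of_forall hR)
    _ = M / 2 * h ^ 2 * ∫ u, u ^ 2 * |K u| := integral_const_mul _ _

theorem measureReal_withDensity_ofReal {α : Type*} [MeasurableSpace α] (μ : Measure α)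
    {f : α → ℝ} (hf : Measurable f) {s : Set α} (hs : MeasurableSet s) :
    (μ.withDensity fun x => ENNReal.ofReal (f x)).real s = ∫ x in s, max (f x) 0 ∂μ := by
  rw [← mul_one (Measure.real _ s), ← smul_eq_mul, ← setIntegral_const,
    setIntegral_withDensity_eq_setIntegral_toReal_smul (by fun_prop)
      (ae_of_all _ fun _ => ENNReal.ofReal_lt_top) _ hs]
  simp [ENNReal.toReal_ofReal']

theorem integrable_max_zero_of_withDensity_ofReal {α : Type*} [MeasurableSpace α]
    {μ : Measure α} {f : α → ℝ} (hf : Measurable f)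
    [IsFiniteMeasure (μ.withDensity fun x => ENNReal.ofReal (f x))] :
    Integrable (fun x => max (f x) 0) μ := by
  have hfin : ∫⁻ x, ENNReal.ofReal (f x) ∂μ ≠ ⊤ := by
    rw [← setLIntegral_univ, ← withDensity_apply _ MeasurableSet.univ]
    exact measure_ne_top _ _
  simpa [ENNReal.toReal_ofReal'] using integrable_toReal_of_lintegral_ne_top (by fun_prop) hfin

/-- bias of the kernel-smoothed cdf. If the cdf `F` of `μ` has a Lebesgue
density `f` with derivative bounded by `M`, and `K` is a symmetric integrable kernel with
`∫ K = 1` and finite second absolute moment, then for every `t` and `h > 0`,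
`|F̃_h(t) − F(t)| ≤ (M/2)·h²·∫ u²·|K(u)| du`, where `F̃_h(t) = ∫ κ((t−u)/h) dF(u)` and
`κ(t) = ∫_{−∞}^t K`. -/
theorem stmt12 (μ : Measure ℝ) [IsProbabilityMeasure μ]
    (f f' : ℝ → ℝ) (M : ℝ)
    (hμ : μ = MeasureTheory.volume.withDensity fun t => ENNReal.ofReal (f t))
    (hf : ∀ t, HasDerivAt f (f' t) t) (hf'bdd : ∀ t, |f' t| ≤ M)
    (K : ℝ → ℝ) (hKint : Integrable K)
    (hKsymm : ∀ u, K (-u) = K u)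
    (hKone : (∫ u, K u) = 1)
    (hKmom : Integrable fun u => u ^ 2 * |K u|)
    (t h : ℝ) (hh : 0 < h) :
    |(∫ u, (∫ v in Set.Iic ((t - u) / h), K v) ∂μ) - (μ (Set.Iic t)).toReal|
      ≤ (M / 2) * h ^ 2 * ∫ u, u ^ 2 * |K u| := by
  have hf_cont : Continuous f := continuous_iff_continuousAt.2 fun x => (hf x).continuousAt
  have hf_lip : ∀ x y, |f y - f x| ≤ M * |y - x| := fun x y => by
    simpa [Real.norm_eq_abs] using convex_univ.norm_image_sub_le_of_norm_hasDerivWithin_le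
      (fun z _ => (hf z).hasDerivWithinAt) (fun z _ => hf'bdd z) (mem_univ x) (mem_univ y)
  -- `ENNReal.ofReal` clips `f` at `0`, so the actual density of `μ` is `max f 0`.
  set g : ℝ → ℝ := fun s => max (f s) 0
  have hg_lip : ∀ x y, |g y - g x| ≤ M * |y - x| := fun x y =>
    (abs_max_sub_max_le_abs _ _ _).trans (hf_lip x y)
  have hg_int : Integrable g := by
    subst hμ; exact integrable_max_zero_of_withDensity_ofReal hf_cont.measurable
  have hcdf (x : ℝ) : μ.real (Iic x) = ∫ s in Iic x, g s := by
    rw [hμ]; exact measureReal_withDensity_ofReal volume hf_cont.measurable measurableSet_Iic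
  have htaylor (y : ℝ) :
      |μ.real (Iic y) - μ.real (Iic t) - (y - t) * g t| ≤ M / 2 * (y - t) ^ 2 := by
    rw [hcdf, hcdf, intervalIntegral.integral_Iic_sub_Iic hg_int.integrableOn hg_int.integrableOn]
    exact abs_intervalIntegral_sub_mul_le (hf_cont.max continuous_const) hg_lip t y
  have hcdf_mono : Monotone fun x => μ.real (Iic x) := fun x y hxy =>
    measureReal_mono (Iic_subset_Iic.2 hxy)
  rw [integral_setIntegral_Iic_div_eq μ hKint t hh]
  exact abs_integral_mul_comp_sub_sub_le hcdf_mono.measurable htaylor hKint hKsymm hKone hKmom h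
end
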